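/- arXiv:2508.19473 — 4 statements merged into one kernel-verified Lean document; each statement's English description precedes it below -/
import Mathlib

section
/- Let M be a matroid on ground set X whose elements can be partitioned into α independent sets T_1, …, T_α, and let S_1, …, S_{α+B} be disjoint independent sets of M covering a subset of X that omits a nonempty set U. Restrict to a set Y ⊆ X with U ⊆ Y, setting T_i' = T_i ∩ Y and S_j' = S_j ∩ Y. Then the number of pairs (j, x) with x ∈ Y \ S_j' and S_j' ∪ {x} independent is strictly greater than B·|Y|. -/
/-!
Fix a colour class `I = S j ∩ Y`. The elements `x ∈ Y` with `I + x` dependent, together with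
`I`, meet every `T i` in an independent set that cannot augment `I`, so by the exchange property
they number at most `a * |I|`. Hence each colour class can be extended by at least
`|Y| - a * |S j ∩ Y|` elements of `Y`. Summing over the `a + b` colours and using that the colour
classes meet `Y` in at most `|Y| - 1` elements (some uncoloured element lies in `Y`) gives more
than `b * |Y|` extensions.
-/

open scoped Classical

structure FinMatroid (α : Type*) [DecidableEq α] where
  E : Finset α
  Indep : Finset α → Prop
  indep_empty : Indep ∅
  subset_ground : ∀ ⦃I⦄, Indep I → I ⊆ E
  indep_mono : ∀ ⦃I J⦄, Indep J → I ⊆ J → Indep I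
  indep_exchange : ∀ ⦃I J⦄, Indep I → Indep J → I.card < J.card →
      ∃ x ∈ J \ I, Indep (insert x I)

/-- A circuit is an inclusion-minimal dependent set (contained in the ground set). -/
def FinMatroid.Circuit {α : Type*} [DecidableEq α] (M : FinMatroid α) (C : Finset α) : Prop :=
  C ⊆ M.E ∧ ¬ M.Indep C ∧ ∀ D ⊂ C, M.Indep D

open Finset Function

namespace FinMatroid

variable {α : Type*} [DecidableEq α] (M : FinMatroid α)

lemma card_le_of_forall_not_indep_insert {I J : Finset α} (hI : M.Indep I) (hJ : M.Indep J)
    (h : ∀ x ∈ J, x ∉ I → ¬ M.Indep (insert x I)) : J.card ≤ I.card := by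
  by_contra! hlt
  obtain ⟨x, hx, hxI⟩ := M.indep_exchange hI hJ hlt
  rw [mem_sdiff] at hx
  exact h x hx.1 hx.2 hxI

lemma card_le_card_mul_of_forall_not_indep_insert {ι : Type*} [Fintype ι] {T : ι → Finset α}
    (hT : ∀ i, M.Indep (T i)) {I Z : Finset α} (hI : M.Indep I) (hZ : Z ⊆ univ.biUnion T)
    (h : ∀ x ∈ Z, x ∉ I → ¬ M.Indep (insert x I)) : Z.card ≤ Fintype.card ι * I.card := by
  have hZ_eq : univ.biUnion (fun i => T i ∩ Z) = Z := by
    rw [← biUnion_inter, inter_eq_right.2 hZ]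
  have hpiece : ∀ i, (T i ∩ Z).card ≤ I.card := fun i =>
    M.card_le_of_forall_not_indep_insert hI (M.indep_mono (hT i) inter_subset_left)
      fun x hx => h x (mem_inter.1 hx).2
  calc Z.card = (univ.biUnion fun i => T i ∩ Z).card := by rw [hZ_eq]
    _ ≤ ∑ i, (T i ∩ Z).card := card_biUnion_le
    _ ≤ ∑ _i : ι, I.card := sum_le_sum fun i _ => hpiece i
    _ = Fintype.card ι * I.card := by rw [sum_const, card_univ, smul_eq_mul]

lemma card_le_card_filter_indep_insert_add {ι : Type*} [Fintype ι] {T : ι → Finset α}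
    (hT : ∀ i, M.Indep (T i)) {I Y : Finset α} (hI : M.Indep I) (hIY : I ⊆ Y)
    (hY : Y ⊆ univ.biUnion T) :
    Y.card ≤ ((Y \ I).filter fun x => M.Indep (insert x I)).card + Fintype.card ι * I.card := by
  set D := (Y \ I).filter fun x => ¬ M.Indep (insert x I)
  have hD : D ⊆ Y \ I := filter_subset _ _
  have hID : Disjoint I D := disjoint_of_subset_right hD disjoint_sdiff
  have hspan : (I ∪ D).card ≤ Fintype.card ι * I.card := by
    refine M.card_le_card_mul_of_forall_not_indep_insert hT hI ?_ fun x hx hxI => ?_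
    · exact union_subset (hIY.trans hY) ((hD.trans sdiff_subset).trans hY)
    · exact (mem_filter.1 ((mem_union.1 hx).resolve_left hxI)).2
  have hsplit : ((Y \ I).filter fun x => M.Indep (insert x I)).card + D.card = (Y \ I).card :=
    card_filter_add_card_filter_not _
  rw [card_union_of_disjoint hID] at hspan
  have hYsplit := card_sdiff_add_card_eq_card hIY
  omega

end FinMatroid

lemma Finset.sum_card_inter_add_card_sdiff_biUnion {α ι : Type*} [DecidableEq α] [Fintype ι]
    {S : ι → Finset α} (hS : Pairwise (Disjoint on S)) (Y : Finset α) :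
    ∑ j, (S j ∩ Y).card + (Y \ univ.biUnion S).card = Y.card := by
  have hdisj : ((univ : Finset ι) : Set ι).PairwiseDisjoint fun j => S j ∩ Y := fun i _ j _ hij =>
    (hS hij).mono inter_subset_left inter_subset_left
  rw [← card_biUnion hdisj, ← biUnion_inter, inter_comm, card_inter_add_card_sdiff]

theorem stmt_6_general {α : Type*} [DecidableEq α] (M : FinMatroid α) (a b : ℕ)
    (T : Fin a → Finset α) (S : Fin (a + b) → Finset α) (Y : Finset α)
    (hT : ∀ i, M.Indep (T i))
    (hTcov : Finset.univ.biUnion T = M.E)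
    (hS : ∀ j, M.Indep (S j)) (hSdisj : ∀ i j, i ≠ j → Disjoint (S i) (S j))
    (hU : (M.E \ Finset.univ.biUnion S).Nonempty)
    (hUY : M.E \ Finset.univ.biUnion S ⊆ Y) (hY : Y ⊆ M.E) :
    b * Y.card <
      ∑ j : Fin (a + b), ((Y \ S j).filter fun x => M.Indep (insert x (S j ∩ Y))).card := by
  have hcolour (j : Fin (a + b)) : Y.card ≤
      ((Y \ S j).filter fun x => M.Indep (insert x (S j ∩ Y))).card + a * (S j ∩ Y).card := by
    simpa only [sdiff_inter_self_right, Fintype.card_fin] using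
      M.card_le_card_filter_indep_insert_add hT (M.indep_mono (hS j) inter_subset_left)
        inter_subset_right (hY.trans hTcov.ge)
  have hsum := sum_le_sum fun j (_ : j ∈ univ) => hcolour j
  rw [sum_const, card_univ, Fintype.card_fin, smul_eq_mul, sum_add_distrib, ← mul_sum] at hsum
  have hpart := sum_card_inter_add_card_sdiff_biUnion (fun i j => hSdisj i j) Y
  obtain ⟨u, hu⟩ := hU
  have huncoloured : 0 < (Y \ univ.biUnion S).card :=
    card_pos.2 ⟨u, mem_sdiff.2 ⟨hUY hu, (mem_sdiff.1 hu).2⟩⟩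
  obtain ⟨i, -, -⟩ := mem_biUnion.1 (hTcov.ge (mem_sdiff.1 hu).1)
  nlinarith [i.pos]

/-- The cut-counting lemma: if the ground set partitions into `a` independent sets
`T i`, the `S j` (`j < a + b`) are disjoint independent color classes leaving a
nonempty set of uncolored elements, and `Y` contains all uncolored elements, then the
number of pairs `(j, x)` with `x ∈ Y \ S j` and `(S j ∩ Y) ∪ {x}` independent exceeds
`b * |Y|`. -/
theorem stmt_6 {α : Type*} [DecidableEq α] (M : FinMatroid α) (a b : ℕ)
    (T : Fin a → Finset α) (S : Fin (a + b) → Finset α) (Y : Finset α)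
    (hT : ∀ i, M.Indep (T i)) (hTdisj : ∀ i j, i ≠ j → Disjoint (T i) (T j))
    (hTcov : Finset.univ.biUnion T = M.E)
    (hS : ∀ j, M.Indep (S j)) (hSdisj : ∀ i j, i ≠ j → Disjoint (S i) (S j))
    (hU : (M.E \ Finset.univ.biUnion S).Nonempty)
    (hUY : M.E \ Finset.univ.biUnion S ⊆ Y) (hY : Y ⊆ M.E) :
    b * Y.card <
      ∑ j : Fin (a + b), ((Y \ S j).filter fun x => M.Indep (insert x (S j ∩ Y))).card :=
  stmt_6_general M a b T S Y hT hTcov hS hSdisj hU hUY hY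
end

section
/- Let S_1, …, S_m be disjoint independent sets of a matroid M (a partial coloring), Y a set of elements containing all uncolored elements, and j ∈ [m], x ∈ Y \ S_j with (S_j ∩ Y) ∪ {x} independent. Then either S_j ∪ {x} is independent, or there exists y ∈ S_j \ Y such that (S_j \ {y}) ∪ {x} is independent. -/
open scoped Classical

/-!
Extend `insert x (S j ∩ Y)` by the augmentation property, using elements of `S j`, to an
independent set `K` of size `|S j|`. If `S j ∪ {x}` is dependent then `K` misses some `y ∈ S j`,
necessarily outside `Y`, and comparing sizes gives `K = (S j \ {y}) ∪ {x}`.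
-/

namespace FinMatroid

open Finset

variable {α : Type*} [DecidableEq α] (M : FinMatroid α)

theorem exists_indep_superset_subset_union_card_eq {I J : Finset α} (hI : M.Indep I)
    (hJ : M.Indep J) (hIJ : #I ≤ #J) :
    ∃ K, I ⊆ K ∧ K ⊆ I ∪ J ∧ M.Indep K ∧ #K = #J := by
  induction h : #J - #I generalizing I with
  | zero => exact ⟨I, subset_rfl, subset_union_left, hI, by omega⟩
  | succ n ih =>
    obtain ⟨z, hz, hzI⟩ := M.indep_exchange hI hJ (by omega)
    rw [mem_sdiff] at hz
    obtain ⟨K, hIK, hKJ, hK, hcard⟩ := ih hzI (by rw [card_insert_of_notMem hz.2]; omega)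
      (by rw [card_insert_of_notMem hz.2]; omega)
    refine ⟨K, (subset_insert z I).trans hIK, ?_, hK, hcard⟩
    rwa [insert_union, insert_eq_of_mem (mem_union_right _ hz.1)] at hKJ

theorem exists_indep_insert_erase_of_not_indep_insert {I Z : Finset α} {x : α}
    (hI : M.Indep I) (hxI : x ∉ I) (hZI : Z ⊆ I) (hxZ : M.Indep (insert x Z))
    (hxI_dep : ¬ M.Indep (insert x I)) :
    ∃ y ∈ I \ Z, M.Indep (insert x (I.erase y)) := by
  have hZ_ne : Z ≠ I := by rintro rfl; exact hxI_dep hxZ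
  have hZ_lt : #Z < #I := card_lt_card (ssubset_of_subset_of_ne hZI hZ_ne)
  obtain ⟨K, hxZK, hKI, hK, hcard⟩ := M.exists_indep_superset_subset_union_card_eq hxZ hI
    ((card_insert_le x Z).trans hZ_lt)
  rw [insert_union, union_eq_right.mpr hZI] at hKI
  have hxK : x ∈ K := hxZK (mem_insert_self x Z)
  obtain ⟨y, hyI, hyK⟩ : ∃ y ∈ I, y ∉ K := by
    by_contra! hIK
    exact hxI_dep (by rwa [(insert_subset hxK hIK).antisymm hKI])
  have hyZ : y ∉ Z := fun hyZ => hyK (hxZK (mem_insert_of_mem hyZ))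
  have hK_eq : K = insert x (I.erase y) := by
    refine eq_of_subset_of_card_le (fun a ha => ?_) ?_
    · rw [← erase_insert_of_ne (ne_of_mem_of_not_mem hxK hyK)]
      exact mem_erase.mpr ⟨ne_of_mem_of_not_mem ha hyK, hKI ha⟩
    · rw [hcard, card_insert_of_notMem (fun h => hxI (mem_of_mem_erase h)),
        card_erase_of_mem hyI]
      have := card_pos.mpr ⟨y, hyI⟩
      omega
  exact ⟨y, mem_sdiff.mpr ⟨hyI, hyZ⟩, hK_eq ▸ hK⟩

end FinMatroid

theorem stmt_7_general {α : Type*} [DecidableEq α] (M : FinMatroid α) (m : ℕ)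
    (S : Fin m → Finset α) (Y : Finset α) (j : Fin m) (x : α)
    (hS : ∀ i, M.Indep (S i))
    (hx : x ∈ Y \ S j)
    (hind : M.Indep (insert x (S j ∩ Y))) :
    M.Indep (insert x (S j)) ∨ ∃ y ∈ S j \ Y, M.Indep (insert x ((S j).erase y)) := by
  refine or_iff_not_imp_left.mpr fun hdep => ?_
  obtain ⟨y, hy, hy_indep⟩ := M.exists_indep_insert_erase_of_not_indep_insert (hS j)
    (Finset.mem_sdiff.mp hx).2 Finset.inter_subset_left hind hdep
  exact ⟨y, by simpa using hy, hy_indep⟩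

/-- If `Y` contains all uncolored elements and `x ∈ Y \ S j` with `(S j ∩ Y) ∪ {x}`
independent, then either `S j ∪ {x}` is independent, or some `y ∈ S j \ Y` has
`(S j \ {y}) ∪ {x}` independent. -/
theorem stmt_7 {α : Type*} [DecidableEq α] (M : FinMatroid α) (m : ℕ)
    (S : Fin m → Finset α) (Y : Finset α) (j : Fin m) (x : α)
    (hS : ∀ i, M.Indep (S i)) (hSdisj : ∀ i i', i ≠ i' → Disjoint (S i) (S i'))
    (hY : M.E \ Finset.univ.biUnion S ⊆ Y)
    (hx : x ∈ Y \ S j)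
    (hind : M.Indep (insert x (S j ∩ Y))) :
    M.Indep (insert x (S j)) ∨ ∃ y ∈ S j \ Y, M.Indep (insert x ((S j).erase y)) :=
  stmt_7_general M m S Y j x hS hx hind
end

section
/- If a graph G with maximum degree Δ has its edges partitioned into Δ+1 matchings and M is any matroid on V(G) with chromatic number χ(M), then χ(G ∩ M) = χ(M ∩ M_1 ∩ … ∩ M_{Δ+1}), where M_1, …, M_{Δ+1} are the partition matroids induced by the matchings. Consequently, any coloring theorem for intersections of a matroid with partition matroids of chromatic number 2 yields χ(G ∩ M) ≤ Δ + χ(M) + 1 whenever intersections of M with k partition matroids can be colored with 1 + (χ(M)-1) + Σ(χ(M_i)-1) colors. -/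
open scoped Classical

namespace SimpleGraph

variable {V ι : Type*} {G : SimpleGraph V} {H : ι → SimpleGraph V}

theorem iSup_eq_of_iUnion_edgeSet_eq (h : ⋃ i, (H i).edgeSet = G.edgeSet) : ⨆ i, H i = G :=
  edgeSet_inj.1 (edgeSet_iSup.trans h)

theorem forall_not_iSup_adj_iff {s : Finset V} :
    (∀ v ∈ s, ∀ w ∈ s, ¬ (⨆ i, H i).Adj v w) ↔ ∀ i, ∀ v ∈ s, ∀ w ∈ s, ¬ (H i).Adj v w := by
  simp only [iSup_adj, not_exists]
  exact ⟨fun h i v hv w hw => h v hv w hw i, fun h v hv w hw i => h i v hv w hw⟩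

end SimpleGraph

theorem stmt_10_general {V : Type*} [Fintype V] [DecidableEq V] (Δ : ℕ)
    (G : SimpleGraph V) (H : Fin (Δ + 1) → SimpleGraph V)
    (hcover : (⋃ i, (H i).edgeSet) = G.edgeSet)
    (M : FinMatroid V)
    (χM : ℕ)
    (hχM : IsLeast {n : ℕ | ∃ f : V → ℕ, (∀ y, f y < n) ∧
        ∀ c : ℕ, M.Indep (Finset.univ.filter fun y => f y = c)} χM) :
    (∀ n : ℕ,
        IsLeast {m : ℕ | ∃ f : V → ℕ, (∀ y, f y < m) ∧
            ∀ c : ℕ, M.Indep (Finset.univ.filter fun y => f y = c) ∧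
              ∀ v ∈ Finset.univ.filter (fun y => f y = c),
                ∀ w ∈ Finset.univ.filter (fun y => f y = c), ¬ G.Adj v w} n ↔
        IsLeast {m : ℕ | ∃ f : V → ℕ, (∀ y, f y < m) ∧
            ∀ c : ℕ, M.Indep (Finset.univ.filter fun y => f y = c) ∧
              ∀ i, ∀ v ∈ Finset.univ.filter (fun y => f y = c),
                ∀ w ∈ Finset.univ.filter (fun y => f y = c), ¬ (H i).Adj v w} n)
    ∧ ((∃ f : V → ℕ, (∀ y, f y < 1 + (χM - 1) + ∑ _i : Fin (Δ + 1), (2 - 1)) ∧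
          ∀ c : ℕ, M.Indep (Finset.univ.filter fun y => f y = c) ∧
            ∀ i, ∀ v ∈ Finset.univ.filter (fun y => f y = c),
              ∀ w ∈ Finset.univ.filter (fun y => f y = c), ¬ (H i).Adj v w) →
        ∃ f : V → ℕ, (∀ y, f y < Δ + χM + 1) ∧
          ∀ c : ℕ, M.Indep (Finset.univ.filter fun y => f y = c) ∧
            ∀ v ∈ Finset.univ.filter (fun y => f y = c),
              ∀ w ∈ Finset.univ.filter (fun y => f y = c), ¬ G.Adj v w) := by
  -- With `G = ⨆ i, H i`, a colour class is `G`-stable iff it is stable in every matching,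
  -- so the two sets of admissible colour counts coincide.
  obtain rfl := SimpleGraph.iSup_eq_of_iUnion_edgeSet_eq hcover
  simp only [SimpleGraph.forall_not_iSup_adj_iff, iff_self, implies_true, true_and]
  rintro ⟨f, hf, hc⟩
  refine ⟨f, fun y => ?_, hc⟩
  obtain ⟨g, hg, -⟩ := hχM.1
  have hχM_pos : 0 < χM := (Nat.zero_le _).trans_lt (hg y)
  have := hf y
  simp only [Finset.sum_const, Finset.card_univ, Fintype.card_fin, smul_eq_mul] at this
  omega

/-- `χ(G ∩ M) = χ(M ∩ M_1 ∩ … ∩ M_{Δ+1})` where the `M i` are the partition matroids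
induced by a partition of the edges of `G` (max degree `Δ`) into `Δ+1` matchings;
consequently a coloring of the latter intersection with `1 + (χ(M)-1) + Σ (2-1)`
colors yields `χ(G ∩ M) ≤ Δ + χ(M) + 1`. -/
theorem stmt_10 {V : Type*} [Fintype V] [DecidableEq V] (Δ : ℕ)
    (G : SimpleGraph V) [DecidableRel G.Adj] (hdeg : G.maxDegree ≤ Δ)
    (H : Fin (Δ + 1) → SimpleGraph V)
    (hle : ∀ i, H i ≤ G)
    (hmatch : ∀ i, ∀ v w w' : V, (H i).Adj v w → (H i).Adj v w' → w = w')
    (hdisj : ∀ i j, i ≠ j → Disjoint ((H i).edgeSet) ((H j).edgeSet))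
    (hcover : (⋃ i, (H i).edgeSet) = G.edgeSet)
    (M : FinMatroid V) (hME : M.E = Finset.univ)
    (χM : ℕ)
    (hχM : IsLeast {n : ℕ | ∃ f : V → ℕ, (∀ y, f y < n) ∧
        ∀ c : ℕ, M.Indep (Finset.univ.filter fun y => f y = c)} χM) :
    (∀ n : ℕ,
        IsLeast {m : ℕ | ∃ f : V → ℕ, (∀ y, f y < m) ∧
            ∀ c : ℕ, M.Indep (Finset.univ.filter fun y => f y = c) ∧
              ∀ v ∈ Finset.univ.filter (fun y => f y = c),
                ∀ w ∈ Finset.univ.filter (fun y => f y = c), ¬ G.Adj v w} n ↔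
        IsLeast {m : ℕ | ∃ f : V → ℕ, (∀ y, f y < m) ∧
            ∀ c : ℕ, M.Indep (Finset.univ.filter fun y => f y = c) ∧
              ∀ i, ∀ v ∈ Finset.univ.filter (fun y => f y = c),
                ∀ w ∈ Finset.univ.filter (fun y => f y = c), ¬ (H i).Adj v w} n)
    ∧ ((∃ f : V → ℕ, (∀ y, f y < 1 + (χM - 1) + ∑ _i : Fin (Δ + 1), (2 - 1)) ∧
          ∀ c : ℕ, M.Indep (Finset.univ.filter fun y => f y = c) ∧
            ∀ i, ∀ v ∈ Finset.univ.filter (fun y => f y = c),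
              ∀ w ∈ Finset.univ.filter (fun y => f y = c), ¬ (H i).Adj v w) →
        ∃ f : V → ℕ, (∀ y, f y < Δ + χM + 1) ∧
          ∀ c : ℕ, M.Indep (Finset.univ.filter fun y => f y = c) ∧
            ∀ v ∈ Finset.univ.filter (fun y => f y = c),
              ∀ w ∈ Finset.univ.filter (fun y => f y = c), ¬ G.Adj v w) :=
  stmt_10_general Δ G H hcover M χM hχM
end

section
/- Let M_1 be a matroid of chromatic number α and M_2, …, M_k partition matroids, and set B = Σ_{i=2}^k (χ(M_i)-1). Given any partial coloring c of i elements with α+B colors feasible in all the matroids and with at least one element uncolored, there exists a partial coloring c' of i+1 elements with α+B colors that is feasible in all the matroids. Consequently, the intersection ∩_{i=1}^k M_i has chromatic number at most 1 + Σ_{i=1}^k (χ(M_i) - 1). -/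
open scoped Classical

namespace Aux19

variable {V : Type*} [DecidableEq V]

noncomputable def rk (M : FinMatroid V) (X : Finset V) : ℕ :=
  (X.powerset.filter M.Indep).sup Finset.card

lemma card_le_rk {M : FinMatroid V} {S X : Finset V} (hS : M.Indep S) (hSX : S ⊆ X) :
    S.card ≤ rk M X :=
  Finset.le_sup (by simp [Finset.mem_filter, Finset.mem_powerset, hS, hSX])

lemma exists_rk (M : FinMatroid V) (X : Finset V) :
    ∃ S, S ⊆ X ∧ M.Indep S ∧ rk M X = S.card := by
  have hne : (X.powerset.filter M.Indep).Nonempty :=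
    ⟨∅, by simp [M.indep_empty]⟩
  obtain ⟨S, hS, hsup⟩ := Finset.exists_mem_eq_sup _ hne Finset.card
  simp only [Finset.mem_filter, Finset.mem_powerset] at hS
  exact ⟨S, hS.1, hS.2, hsup⟩

lemma rk_mono {M : FinMatroid V} {X Y : Finset V} (h : X ⊆ Y) : rk M X ≤ rk M Y := by
  apply Finset.sup_le
  intro S hS
  simp only [Finset.mem_filter, Finset.mem_powerset] at hS
  exact card_le_rk hS.2 (hS.1.trans h)

lemma rk_indep {M : FinMatroid V} {X : Finset V} (h : M.Indep X) : rk M X = X.card := by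
  refine le_antisymm ?_ (card_le_rk h Finset.Subset.rfl)
  apply Finset.sup_le
  intro S hS
  simp only [Finset.mem_filter, Finset.mem_powerset] at hS
  exact Finset.card_le_card hS.1

lemma maximal_card {M : FinMatroid V} {B X : Finset V} (hB : M.Indep B) (hBX : B ⊆ X)
    (hmax : ∀ w ∈ X, w ∉ B → ¬ M.Indep (insert w B)) : B.card = rk M X := by
  refine le_antisymm (card_le_rk hB hBX) ?_
  obtain ⟨S, hSX, hSi, hrk⟩ := exists_rk M X
  rw [hrk]
  by_contra hlt
  push_neg at hlt
  obtain ⟨w, hw, hwi⟩ := M.indep_exchange hB hSi hlt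
  rw [Finset.mem_sdiff] at hw
  exact hmax w (hSX hw.1) hw.2 hwi

lemma exists_maximal_aux {M : FinMatroid V} :
    ∀ (m : ℕ) {S X : Finset V}, X.card - S.card ≤ m → M.Indep S → S ⊆ X →
    ∃ Bs, S ⊆ Bs ∧ Bs ⊆ X ∧ M.Indep Bs ∧ ∀ w ∈ X, w ∉ Bs → ¬ M.Indep (insert w Bs) := by
  intro m
  induction m with
  | zero =>
    intro S X hc hS hSX
    have hXS : X = S := by
      have := Finset.card_le_card hSX
      exact (Finset.eq_of_subset_of_card_le hSX (by omega)).symm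
    exact ⟨S, Finset.Subset.rfl, hSX, hS, fun w hw hw' => absurd (hXS ▸ hw) hw'⟩
  | succ m ih =>
    intro S X hc hS hSX
    by_cases hmax : ∀ w ∈ X, w ∉ S → ¬ M.Indep (insert w S)
    · exact ⟨S, Finset.Subset.rfl, hSX, hS, hmax⟩
    · push_neg at hmax
      obtain ⟨w, hwX, hwS, hwi⟩ := hmax
      have hsub : insert w S ⊆ X := Finset.insert_subset hwX hSX
      have hcard : X.card - (insert w S).card ≤ m := by
        rw [Finset.card_insert_of_notMem hwS]
        have := Finset.card_le_card hsub
        omega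
      obtain ⟨Bs, h1, h2, h3, h4⟩ := ih hcard hwi hsub
      exact ⟨Bs, (Finset.subset_insert w S).trans h1, h2, h3, h4⟩

lemma exists_maximal {M : FinMatroid V} {S X : Finset V} (hS : M.Indep S) (hSX : S ⊆ X) :
    ∃ Bs, S ⊆ Bs ∧ Bs ⊆ X ∧ M.Indep Bs ∧ ∀ w ∈ X, w ∉ Bs → ¬ M.Indep (insert w Bs) :=
  exists_maximal_aux X.card (by omega) hS hSX

def Spans (M : FinMatroid V) (X : Finset V) (y : V) : Prop :=
  rk M (insert y X) = rk M X

lemma spans_mono {M : FinMatroid V} {X Y : Finset V} {u : V} (h : Spans M X u) (hXY : X ⊆ Y) :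
    Spans M Y u := by
  by_cases hu : u ∈ Y
  · simp [Spans, Finset.insert_eq_self.2 hu]
  · have huX : u ∉ X := fun hx => hu (hXY hx)
    obtain ⟨B0, -, hB0X, hB0i, hB0max⟩ :=
      exists_maximal (M := M) (S := ∅) (X := X) M.indep_empty (Finset.empty_subset X)
    obtain ⟨Bs, hB0B, hBY, hBi, hBmax⟩ := exists_maximal hB0i (hB0X.trans hXY)
    have hB0card : B0.card = rk M X := maximal_card hB0i hB0X hB0max
    have hBcard : Bs.card = rk M Y := maximal_card hBi hBY hBmax
    have hkey : ¬ M.Indep (insert u Bs) := by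
      intro hind
      have h1 : M.Indep (insert u B0) :=
        M.indep_mono hind (Finset.insert_subset_insert _ hB0B)
      have huB0 : u ∉ B0 := fun hx => huX (hB0X hx)
      have h2 : (insert u B0).card ≤ rk M (insert u X) :=
        card_le_rk h1 (Finset.insert_subset_insert _ hB0X)
      rw [Finset.card_insert_of_notMem huB0] at h2
      unfold Spans at h
      omega
    have hmax' : ∀ w ∈ insert u Y, w ∉ Bs → ¬ M.Indep (insert w Bs) := by
      intro w hw hwB
      rcases Finset.mem_insert.1 hw with rfl | hwY
      · exact hkey
      · exact hBmax w hwY hwB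
    have : Bs.card = rk M (insert u Y) :=
      maximal_card hBi (hBY.trans (Finset.subset_insert u Y)) hmax'
    unfold Spans
    omega

lemma spans_of_mem {M : FinMatroid V} {X : Finset V} {y : V} (h : y ∈ X) : Spans M X y := by
  simp [Spans, Finset.insert_eq_self.2 h]

lemma spans_insert_iff {M : FinMatroid V} {Z : Finset V} {u y : V} (h : Spans M Z u) :
    Spans M (insert u Z) y ↔ Spans M Z y := by
  have hcomm : insert y (insert u Z) = insert u (insert y Z) := Finset.insert_comm y u Z
  have h2 : rk M (insert u (insert y Z)) = rk M (insert y Z) :=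
    spans_mono h (Finset.subset_insert y Z)
  unfold Spans at h ⊢
  rw [hcomm, h, h2]

lemma spans_erase_iff {M : FinMatroid V} {W : Finset V} {v y : V} (hv : v ∈ W)
    (hsp : Spans M (W.erase v) v) : Spans M W y ↔ Spans M (W.erase v) y := by
  conv_lhs => rw [← Finset.insert_erase hv]
  exact spans_insert_iff hsp

lemma rk_union_eq {M : FinMatroid V} {Z Y : Finset V} (h : ∀ y ∈ Y, Spans M Z y) :
    rk M (Z ∪ Y) = rk M Z := by
  induction Y using Finset.induction_on with
  | empty => simp
  | @insert y Y hy ih =>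
    have h1 : Spans M (Z ∪ Y) y :=
      spans_mono (h y (Finset.mem_insert_self _ _)) Finset.subset_union_left
    have he : Z ∪ insert y Y = insert y (Z ∪ Y) := Finset.union_insert y Z Y
    rw [he]
    unfold Spans at h1
    rw [h1, ih (fun w hw => h w (Finset.mem_insert_of_mem hw))]

lemma rk_le_of_spans {M : FinMatroid V} {Z Y : Finset V} (h : ∀ y ∈ Y, Spans M Z y) :
    rk M Y ≤ rk M Z := by
  calc rk M Y ≤ rk M (Z ∪ Y) := rk_mono Finset.subset_union_right
  _ = rk M Z := rk_union_eq h

def MinDep (M : FinMatroid V) (C : Finset V) : Prop :=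
  ¬ M.Indep C ∧ ∀ D ⊂ C, M.Indep D

lemma exists_minDep_aux {M : FinMatroid V} :
    ∀ (m : ℕ) {X : Finset V}, X.card ≤ m → ¬ M.Indep X → ∃ C, C ⊆ X ∧ MinDep M C := by
  intro m
  induction m with
  | zero =>
    intro X hc hX
    have : X = ∅ := Finset.card_eq_zero.1 (by omega)
    subst this
    exact absurd M.indep_empty hX
  | succ m ih =>
    intro X hc hX
    by_cases hmin : ∀ D ⊂ X, M.Indep D
    · exact ⟨X, Finset.Subset.rfl, hX, hmin⟩
    · push_neg at hmin
      obtain ⟨D, hDX, hD⟩ := hmin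
      have := Finset.card_lt_card hDX
      obtain ⟨C, hCD, hC⟩ := ih (by omega) hD
      exact ⟨C, hCD.trans hDX.subset, hC⟩

lemma exists_minDep {M : FinMatroid V} {X : Finset V} (h : ¬ M.Indep X) :
    ∃ C, C ⊆ X ∧ MinDep M C :=
  exists_minDep_aux X.card (le_refl _) h

lemma minDep_spans {M : FinMatroid V} {C : Finset V} {y : V} (hC : MinDep M C) (hy : y ∈ C) :
    Spans M (C.erase y) y := by
  have h1 : M.Indep (C.erase y) := hC.2 _ (Finset.erase_ssubset hy)
  have h2 : rk M (C.erase y) = C.card - 1 := by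
    rw [rk_indep h1, Finset.card_erase_of_mem hy]
  have h3 : rk M C ≤ C.card - 1 := by
    apply Finset.sup_le
    intro S hS
    simp only [Finset.mem_filter, Finset.mem_powerset] at hS
    have hne : S ≠ C := fun h => hC.1 (h ▸ hS.2)
    have hss : S ⊂ C := Finset.ssubset_iff_subset_ne.2 ⟨hS.1, hne⟩
    have := Finset.card_lt_card hss
    omega
  have h4 : rk M C = C.card - 1 :=
    le_antisymm h3 (h2 ▸ rk_mono (Finset.erase_subset _ _))
  unfold Spans
  rw [Finset.insert_erase hy, h4, h2]

lemma minDep_elim {M : FinMatroid V} {C1 C2 : Finset V} {e : V} (h1 : MinDep M C1)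
    (h2 : MinDep M C2) (hne : C1 ≠ C2) (he1 : e ∈ C1) (he2 : e ∈ C2) :
    ¬ M.Indep ((C1 ∪ C2).erase e) := by
  have hf : ∃ f ∈ C1, f ∉ C2 := by
    by_contra h
    push_neg at h
    have hss : C1 ⊂ C2 := Finset.ssubset_iff_subset_ne.2 ⟨h, hne⟩
    exact h1.1 (h2.2 _ hss)
  obtain ⟨f, hf1, hf2⟩ := hf
  have hCf : M.Indep (C1.erase f) := h1.2 _ (Finset.erase_ssubset hf1)
  obtain ⟨Bs, hB0, hBX, hBi, hBmax⟩ :=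
    exists_maximal hCf ((Finset.erase_subset _ _).trans Finset.subset_union_left)
  have hfB : f ∉ Bs := by
    intro hfB
    have hsub : C1 ⊆ Bs := by
      intro w hw
      by_cases hwf : w = f
      · exact hwf ▸ hfB
      · exact hB0 (Finset.mem_erase.2 ⟨hwf, hw⟩)
    exact h1.1 (M.indep_mono hBi hsub)
  have hg : ∃ g ∈ C2, g ∉ Bs := by
    by_contra h
    push_neg at h
    exact h2.1 (M.indep_mono hBi h)
  obtain ⟨g, hg2, hgB⟩ := hg
  have hgf : g ≠ f := fun h => hf2 (h ▸ hg2)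
  intro hind
  have hcard1 : (C1 ∪ C2).card - 1 ≤ rk M (C1 ∪ C2) := by
    have h5 := card_le_rk hind (Finset.erase_subset _ _)
    rw [Finset.card_erase_of_mem (Finset.mem_union_left _ he1)] at h5
    exact h5
  have hBcard : Bs.card = rk M (C1 ∪ C2) := maximal_card hBi hBX hBmax
  have hBsub : Bs ⊆ ((C1 ∪ C2).erase f).erase g := by
    intro w hw
    rw [Finset.mem_erase, Finset.mem_erase]
    exact ⟨fun h => hgB (h ▸ hw), fun h => hfB (h ▸ hw), hBX hw⟩
  have hcard2 : Bs.card ≤ (C1 ∪ C2).card - 2 := by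
    have h6 := Finset.card_le_card hBsub
    rw [Finset.card_erase_of_mem
        (Finset.mem_erase.2 ⟨hgf, Finset.mem_union_right _ hg2⟩),
      Finset.card_erase_of_mem (Finset.mem_union_left _ hf1)] at h6
    omega
  have hcard3 : 2 ≤ (C1 ∪ C2).card := by
    have : ({f, g} : Finset V) ⊆ C1 ∪ C2 := by
      intro w hw
      rcases Finset.mem_insert.1 hw with rfl | hw
      · exact Finset.mem_union_left _ hf1
      · exact Finset.mem_union_right _ (Finset.mem_singleton.1 hw ▸ hg2)
    have := Finset.card_le_card this
    rw [Finset.card_insert_of_notMem (by simp [Ne.symm hgf]), Finset.card_singleton] at this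
    omega
  omega

lemma exchange_indep {M : FinMatroid V} {I C : Finset V} {y z : V} (hI : M.Indep I)
    (hy : y ∉ I) (hC : MinDep M C) (hCI : C ⊆ insert y I) (hz : z ∈ C.erase y) :
    M.Indep (insert y (I.erase z)) := by
  have hzC : z ∈ C := Finset.mem_of_mem_erase hz
  have hzy : z ≠ y := Finset.ne_of_mem_erase hz
  have hyC : y ∈ C := by
    by_contra hyC
    apply hC.1
    apply M.indep_mono hI
    intro w hw
    rcases Finset.mem_insert.1 (hCI hw) with rfl | h
    · exact absurd hw hyC
    · exact h
  by_contra hdep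
  obtain ⟨C', hC'sub, hC'⟩ := exists_minDep hdep
  have hyC' : y ∈ C' := by
    by_contra h
    apply hC'.1
    apply M.indep_mono hI
    intro w hw
    rcases Finset.mem_insert.1 (hC'sub hw) with rfl | hw2
    · exact absurd hw h
    · exact Finset.mem_of_mem_erase hw2
  have hzC' : z ∉ C' := by
    intro h
    rcases Finset.mem_insert.1 (hC'sub h) with h2 | h2
    · exact hzy h2
    · exact (Finset.notMem_erase z I) h2
  have hne : C ≠ C' := fun h => hzC' (h ▸ hzC)
  apply minDep_elim hC hC' hne hyC hyC'
  apply M.indep_mono hI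
  intro w hw
  rw [Finset.mem_erase, Finset.mem_union] at hw
  obtain ⟨hwy, hw12⟩ := hw
  rcases hw12 with hw1 | hw2
  · rcases Finset.mem_insert.1 (hCI hw1) with rfl | h
    · exact absurd rfl hwy
    · exact h
  · rcases Finset.mem_insert.1 (hC'sub hw2) with rfl | h
    · exact absurd rfl hwy
    · exact Finset.mem_of_mem_erase h

noncomputable def CCfun (M : FinMatroid V) (X : Finset V) : Finset V :=
  if h : ¬ M.Indep X then (exists_minDep h).choose else ∅

lemma CCfun_spec {M : FinMatroid V} {X : Finset V} (h : ¬ M.Indep X) :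
    CCfun M X ⊆ X ∧ MinDep M (CCfun M X) := by
  rw [CCfun, dif_pos h]
  exact (exists_minDep h).choose_spec

end Aux19

namespace Aux19

variable {V : Type*} [DecidableEq V] {n : ℕ} {ι : Type*} [Fintype ι]

def Cls (M : FinMatroid V) (g : V → Option (Fin n)) (c : Fin n) : Finset V :=
  M.E.filter (fun y => g y = some c)

def Feas (M : FinMatroid V) (part : ι → V → ℕ) (cap : ι → ℕ → ℕ)
    (g : V → Option (Fin n)) : Prop :=
  ∀ c : Fin n, M.Indep (Cls M g c) ∧
    ∀ i t, ((Cls M g c).filter (fun y => part i y = t)).card ≤ cap i t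

def cnt (M : FinMatroid V) (g : V → Option (Fin n)) : ℕ :=
  (M.E.filter (fun y => (g y).isSome)).card

def nonsat (M : FinMatroid V) (part : ι → V → ℕ) (cap : ι → ℕ → ℕ)
    (g : V → Option (Fin n)) (c : Fin n) (y : V) : Prop :=
  ∀ i, ((Cls M g c).filter (fun w => part i w = part i y)).card < cap i (part i y)

def swapFun (g : V → Option (Fin n)) (y z : V) (c : Fin n) : V → Option (Fin n) :=
  fun w => if w = z then none else if w = y then some c else g w

def extFun (g : V → Option (Fin n)) (y : V) (c : Fin n) : V → Option (Fin n) :=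
  fun w => if w = y then some c else g w

lemma insert_erase_comm' {s : Finset V} {y z : V} (h : y ≠ z) :
    insert y (s.erase z) = (insert y s).erase z := by
  ext u
  simp only [Finset.mem_insert, Finset.mem_erase]
  constructor
  · rintro (rfl | ⟨h1, h2⟩)
    · exact ⟨h, Or.inl rfl⟩
    · exact ⟨h1, Or.inr h2⟩
  · rintro ⟨h1, rfl | h2⟩
    · exact Or.inl rfl
    · exact Or.inr ⟨h1, h2⟩

lemma cls_swap_eq (M : FinMatroid V) {g : V → Option (Fin n)} {y z : V} {c : Fin n}
    (hyE : y ∈ M.E) (hy : g y = none) (hz : g z = some c) (hzy : z ≠ y) :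
    Cls M (swapFun g y z c) c = insert y ((Cls M g c).erase z) := by
  ext w
  by_cases hwz : w = z
  · subst hwz
    simp [Cls, swapFun, Finset.mem_insert, Finset.mem_erase, hzy]
  · by_cases hwy : w = y
    · subst hwy
      simp [Cls, swapFun, hwz, hyE]
    · simp [Cls, swapFun, hwz, hwy, Finset.mem_insert, Finset.mem_erase]

lemma cls_swap_ne (M : FinMatroid V) {g : V → Option (Fin n)} {y z : V} {c c' : Fin n}
    (hy : g y = none) (hz : g z = some c) (hcc : c' ≠ c) :
    Cls M (swapFun g y z c) c' = Cls M g c' := by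
  ext w
  by_cases hwz : w = z
  · subst hwz
    simp only [Cls, swapFun, Finset.mem_filter, if_pos rfl]
    simp only [hz, Option.some_inj]
    simp
    exact fun _ h => hcc h.symm
  · by_cases hwy : w = y
    · subst hwy
      simp only [Cls, swapFun, Finset.mem_filter]
      simp [hwz, hy]
      exact fun _ h => hcc h.symm
    · simp [Cls, swapFun, hwz, hwy]

lemma cls_ext_eq (M : FinMatroid V) {g : V → Option (Fin n)} {y : V} {c : Fin n}
    (hyE : y ∈ M.E) : Cls M (extFun g y c) c = insert y (Cls M g c) := by
  ext w
  by_cases hwy : w = y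
  · subst hwy; simp [Cls, extFun, hyE]
  · simp [Cls, extFun, hwy]

lemma cls_ext_ne (M : FinMatroid V) {g : V → Option (Fin n)} {y : V} {c c' : Fin n}
    (hy : g y = none) (hcc : c' ≠ c) :
    Cls M (extFun g y c) c' = Cls M g c' := by
  ext w
  by_cases hwy : w = y
  · subst hwy
    simp only [Cls, Finset.mem_filter]
    simp [extFun, hy]
    intro _ h
    exact hcc h.symm
  · simp only [Cls, Finset.mem_filter]
    simp [extFun, hwy]

lemma cnt_swap (M : FinMatroid V) {g : V → Option (Fin n)} {y z : V} {c : Fin n}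
    (hyE : y ∈ M.E) (hzE : z ∈ M.E) (hy : g y = none) (hz : g z = some c) (hzy : z ≠ y) :
    cnt M (swapFun g y z c) = cnt M g := by
  have hset : M.E.filter (fun w => ((swapFun g y z c) w).isSome)
      = insert y ((M.E.filter (fun w => (g w).isSome)).erase z) := by
    ext w
    by_cases hwz : w = z
    · subst hwz
      simp only [Finset.mem_filter]
      simp [swapFun, Finset.mem_insert, Finset.mem_erase, hzy]
    · by_cases hwy : w = y
      · subst hwy
        simp only [Finset.mem_filter]
        simp [swapFun, hwz, hyE]
      · simp only [Finset.mem_filter]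
        simp [swapFun, hwz, hwy, Finset.mem_insert, Finset.mem_erase]
  have hzmem : z ∈ M.E.filter (fun w => (g w).isSome) :=
    Finset.mem_filter.2 ⟨hzE, by simp [hz]⟩
  have hymem : y ∉ (M.E.filter (fun w => (g w).isSome)).erase z := by
    intro h
    have := Finset.mem_of_mem_erase h
    rw [Finset.mem_filter, hy] at this
    simp at this
  have hpos : 0 < (M.E.filter (fun w => (g w).isSome)).card :=
    Finset.card_pos.2 ⟨z, hzmem⟩
  rw [cnt, cnt, hset, Finset.card_insert_of_notMem hymem, Finset.card_erase_of_mem hzmem]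
  omega

lemma cnt_ext (M : FinMatroid V) {g : V → Option (Fin n)} {y : V} {c : Fin n}
    (hyE : y ∈ M.E) (hy : g y = none) :
    cnt M (extFun g y c) = cnt M g + 1 := by
  have hset : M.E.filter (fun w => ((extFun g y c) w).isSome)
      = insert y (M.E.filter (fun w => (g w).isSome)) := by
    ext w
    by_cases hwy : w = y
    · subst hwy; simp only [Finset.mem_filter]; simp [extFun, hyE]
    · simp only [Finset.mem_filter]; simp [extFun, hwy]
  have hymem : y ∉ M.E.filter (fun w => (g w).isSome) := by
    intro h
    rw [Finset.mem_filter, hy] at h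
    simp at h
  rw [cnt, cnt, hset, Finset.card_insert_of_notMem hymem]

lemma feas_ext (M : FinMatroid V) (part : ι → V → ℕ) (cap : ι → ℕ → ℕ)
    {g : V → Option (Fin n)} {y : V} {c : Fin n}
    (hF : Feas M part cap g) (hyE : y ∈ M.E) (hy : g y = none)
    (hns : nonsat M part cap g c y) (hind : M.Indep (insert y (Cls M g c))) :
    Feas M part cap (extFun g y c) := by
  intro c'
  by_cases hcc : c' = c
  · subst hcc
    rw [cls_ext_eq M hyE]
    refine ⟨hind, ?_⟩
    intro i t
    rw [Finset.filter_insert]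
    by_cases ht : part i y = t
    · rw [if_pos ht]
      have h1 := hns i
      rw [ht] at h1
      calc (insert y ((Cls M g c').filter (fun w => part i w = t))).card
          ≤ ((Cls M g c').filter (fun w => part i w = t)).card + 1 :=
            Finset.card_insert_le _ _
        _ ≤ cap i t := h1
    · rw [if_neg ht]
      exact (hF c').2 i t
  · rw [cls_ext_ne M hy hcc]
    exact hF c'

lemma feas_swap (M : FinMatroid V) (part : ι → V → ℕ) (cap : ι → ℕ → ℕ)
    {g : V → Option (Fin n)} {y z : V} {c : Fin n}
    (hF : Feas M part cap g) (hyE : y ∈ M.E) (hy : g y = none) (hz : g z = some c)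
    (hzy : z ≠ y) (hns : nonsat M part cap g c y)
    (hind : M.Indep (insert y ((Cls M g c).erase z))) :
    Feas M part cap (swapFun g y z c) := by
  intro c'
  by_cases hcc : c' = c
  · subst hcc
    rw [cls_swap_eq M hyE hy hz hzy]
    refine ⟨hind, ?_⟩
    intro i t
    rw [Finset.filter_insert]
    have hsubZ : ((Cls M g c').erase z).filter (fun w => part i w = t)
        ⊆ (Cls M g c').filter (fun w => part i w = t) :=
      Finset.filter_subset_filter _ (Finset.erase_subset _ _)
    by_cases ht : part i y = t
    · rw [if_pos ht]
      have h1 := hns i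
      rw [ht] at h1
      calc (insert y (((Cls M g c').erase z).filter (fun w => part i w = t))).card
          ≤ (((Cls M g c').erase z).filter (fun w => part i w = t)).card + 1 :=
            Finset.card_insert_le _ _
        _ ≤ ((Cls M g c').filter (fun w => part i w = t)).card + 1 :=
            Nat.add_le_add_right (Finset.card_le_card hsubZ) 1
        _ ≤ cap i t := h1
    · rw [if_neg ht]
      exact le_trans (Finset.card_le_card hsubZ) ((hF c').2 i t)
  · rw [cls_swap_ne M hy hz hcc]
    exact hF c'

def Step (M : FinMatroid V) (part : ι → V → ℕ) (cap : ι → ℕ → ℕ)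
    (p q : (V → Option (Fin n)) × V) : Prop :=
  p.2 ∈ M.E ∧ p.1 p.2 = none ∧ ∃ c : Fin n,
    nonsat M part cap p.1 c p.2 ∧
    ¬ M.Indep (insert p.2 (Cls M p.1 c)) ∧
    q.2 ∈ (CCfun M (insert p.2 (Cls M p.1 c))).erase p.2 ∧
    q.1 = swapFun p.1 p.2 q.2 c

lemma step_basic {M : FinMatroid V} {part : ι → V → ℕ} {cap : ι → ℕ → ℕ}
    {p q : (V → Option (Fin n)) × V}
    (hs : Step M part cap p q) (hF : Feas M part cap p.1) :
    Feas M part cap q.1 ∧ cnt M q.1 = cnt M p.1 ∧ q.2 ∈ M.E ∧ q.1 q.2 = none := by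
  obtain ⟨hyE, hyn, c, hns, hdep, hzC, hq⟩ := hs
  have hCs := CCfun_spec hdep
  have hzy : q.2 ≠ p.2 := Finset.ne_of_mem_erase hzC
  have hzCls : q.2 ∈ Cls M p.1 c := by
    have h := hCs.1 (Finset.mem_of_mem_erase hzC)
    rcases Finset.mem_insert.1 h with h2 | h2
    · exact absurd h2 hzy
    · exact h2
  have hz : p.1 q.2 = some c := (Finset.mem_filter.1 hzCls).2
  have hzE : q.2 ∈ M.E := (Finset.mem_filter.1 hzCls).1
  have hyCls : p.2 ∉ Cls M p.1 c := by
    intro h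
    simp only [Cls, Finset.mem_filter, hyn] at h
    simp at h
  have hind : M.Indep (insert p.2 ((Cls M p.1 c).erase q.2)) :=
    exchange_indep (hF c).1 hyCls hCs.2 hCs.1 hzC
  refine ⟨?_, ?_, hzE, ?_⟩
  · rw [hq]
    exact feas_swap M part cap hF hyE hyn hz hzy hns hind
  · rw [hq]
    exact cnt_swap M hyE hzE hyn hz hzy
  · rw [hq]
    simp [swapFun]

end Aux19

namespace Aux19

theorem main_total {V : Type*} [DecidableEq V] {ι : Type*} [Fintype ι]
    (M : FinMatroid V) (part : ι → V → ℕ) (cap : ι → ℕ → ℕ) (a : ℕ)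
    (ha : IsLeast {n : ℕ | ∃ f : V → ℕ, (∀ y ∈ M.E, f y < n) ∧
        ∀ c : ℕ, M.Indep (M.E.filter fun y => f y = c)} a)
    (χp : ι → ℕ)
    (hχp : ∀ i, IsLeast {n : ℕ | ∃ f : V → ℕ, (∀ y ∈ M.E, f y < n) ∧
        ∀ c : ℕ, ∀ t : ℕ,
          ((M.E.filter fun y => f y = c).filter fun y => part i y = t).card ≤ cap i t}
      (χp i))
    (B : ℕ) (hB : B = ∑ i, (χp i - 1)) :
    ∃ G : V → Option (Fin (a + B)), (∀ y ∈ M.E, (G y).isSome) ∧ Feas M part cap G := by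
  classical
  -- K1 : part classes are not too big
  have hK1 : ∀ i t, (M.E.filter fun y => part i y = t).card ≤ χp i * cap i t := by
    intro i t
    obtain ⟨h, hlt, hcap⟩ := (hχp i).1
    have hcover : (M.E.filter fun y => part i y = t) ⊆
        (Finset.range (χp i)).biUnion
          (fun c => (M.E.filter fun y => h y = c).filter fun y => part i y = t) := by
      intro w hw
      rw [Finset.mem_filter] at hw
      refine Finset.mem_biUnion.2 ⟨h w, Finset.mem_range.2 (hlt w hw.1), ?_⟩
      simp [Finset.mem_filter, hw.1, hw.2]
    refine le_trans (Finset.card_le_card hcover) (le_trans Finset.card_biUnion_le ?_)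
    calc ∑ c ∈ Finset.range (χp i),
          ((M.E.filter fun y => h y = c).filter fun y => part i y = t).card
        ≤ ∑ _c ∈ Finset.range (χp i), cap i t :=
          Finset.sum_le_sum (fun c _ => hcap c t)
      _ = χp i * cap i t := by rw [Finset.sum_const, Finset.card_range, smul_eq_mul]
  -- a-colorability bound
  have hKa : ∀ X : Finset V, X ⊆ M.E → X.card ≤ a * rk M X := by
    intro X hXE
    obtain ⟨g0, hg0lt, hg0i⟩ := ha.1
    have hcover : X ⊆ (Finset.range a).biUnion (fun j => X.filter fun y => g0 y = j) := by
      intro w hw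
      exact Finset.mem_biUnion.2 ⟨g0 w, Finset.mem_range.2 (hg0lt w (hXE hw)),
        Finset.mem_filter.2 ⟨hw, rfl⟩⟩
    refine le_trans (Finset.card_le_card hcover) (le_trans Finset.card_biUnion_le ?_)
    have hstep : ∀ j ∈ Finset.range a, (X.filter fun y => g0 y = j).card ≤ rk M X := by
      intro j _
      refine card_le_rk (M.indep_mono (hg0i j) ?_) (Finset.filter_subset _ _)
      intro w hw
      rw [Finset.mem_filter] at hw ⊢
      exact ⟨hXE hw.1, hw.2⟩
    calc ∑ j ∈ Finset.range a, (X.filter fun y => g0 y = j).card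
        ≤ ∑ _j ∈ Finset.range a, rk M X := Finset.sum_le_sum hstep
      _ = a * rk M X := by rw [Finset.sum_const, Finset.card_range, smul_eq_mul]
  -- maximize the number of colored elements
  set P : ℕ → Prop := fun m => ∃ g : V → Option (Fin (a + B)),
    Feas M part cap g ∧ cnt M g = m with hP
  have hP0 : P 0 := by
    refine ⟨fun _ => none, ?_, ?_⟩
    · intro c
      have hcls : Cls M (fun _ => (none : Option (Fin (a + B)))) c = ∅ := by
        simp [Cls]
      rw [hcls]
      exact ⟨M.indep_empty, fun i t => by simp⟩
    · simp [cnt]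
  set N := Nat.findGreatest P M.E.card with hN
  have hPN : P N := Nat.findGreatest_spec (Nat.zero_le _) hP0
  obtain ⟨f, hfF, hfN⟩ := hPN
  by_cases hNE : N = M.E.card
  · refine ⟨f, ?_, hfF⟩
    have hsub : M.E.filter (fun y => (f y).isSome) = M.E := by
      apply Finset.eq_of_subset_of_card_le (Finset.filter_subset _ _)
      have : cnt M f = N := hfN
      rw [cnt] at this
      omega
    intro y hy
    rw [← hsub] at hy
    exact (Finset.mem_filter.1 hy).2
  · exfalso
    have hNle : N ≤ M.E.card := Nat.findGreatest_le _
    have hNlt : N < M.E.card := lt_of_le_of_ne hNle hNE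
    have hx : ∃ x ∈ M.E, f x = none := by
      by_contra h
      push_neg at h
      have heq : M.E.filter (fun y => (f y).isSome) = M.E :=
        Finset.filter_true_of_mem (fun y hy => Option.isSome_iff_ne_none.2 (h y hy))
      rw [cnt, heq] at hfN
      omega
    obtain ⟨x, hxE, hxn⟩ := hx
    have ha1 : 1 ≤ a := by
      by_contra h
      obtain ⟨g0, hg0lt, -⟩ := ha.1
      have := hg0lt x hxE
      omega
    have hK2 : ∀ i, ∀ y ∈ M.E, 1 ≤ cap i (part i y) := by
      intro i y hy
      by_contra h
      have h1 := hK1 i (part i y)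
      have h2 : y ∈ M.E.filter fun w => part i w = part i y :=
        Finset.mem_filter.2 ⟨hy, rfl⟩
      have h3 : 0 < (M.E.filter fun w => part i w = part i y).card :=
        Finset.card_pos.2 ⟨y, h2⟩
      have h4 : cap i (part i y) = 0 := by omega
      rw [h4, Nat.mul_zero] at h1
      omega
    -- no reachable state is terminal
    have hterm : ∀ (g : V → Option (Fin (a + B))) (y : V), Feas M part cap g →
        cnt M g = N → y ∈ M.E → g y = none → ∀ c, nonsat M part cap g c y →
        ¬ M.Indep (insert y (Cls M g c)) := by
      intro g y hF hc hyE hyn c hns hind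
      have hP' : P (N + 1) := by
        refine ⟨extFun g y c, feas_ext M part cap hF hyE hyn hns hind, ?_⟩
        rw [cnt_ext M hyE hyn, hc]
      exact Nat.findGreatest_is_greatest (n := M.E.card) (k := N + 1)
        (by rw [← hN]; omega) (by omega) hP'
    -- reachability
    set Reach : ((V → Option (Fin (a + B))) × V) → ((V → Option (Fin (a + B))) × V) → Prop :=
      Relation.ReflTransGen (Step M part cap) with hReach
    set s0 : (V → Option (Fin (a + B))) × V := (f, x) with hs0
    have hinv : ∀ s, Reach s0 s →
        Feas M part cap s.1 ∧ cnt M s.1 = N ∧ s.2 ∈ M.E ∧ s.1 s.2 = none := by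
      intro s hs
      induction hs with
      | refl => exact ⟨hfF, hfN, hxE, hxn⟩
      | tail hpre hstep ih =>
        obtain ⟨hF, hc, -, -⟩ := ih
        obtain ⟨h1, h2, h3, h4⟩ := step_basic hstep hF
        exact ⟨h1, by rw [h2, hc], h3, h4⟩
    set T : Finset V :=
      M.E.filter (fun v => ∃ g : V → Option (Fin (a + B)), Reach s0 (g, v)) with hT
    have hxT : x ∈ T := Finset.mem_filter.2 ⟨hxE, ⟨f, Relation.ReflTransGen.refl⟩⟩
    have hTE : T ⊆ M.E := Finset.filter_subset _ _
    -- the in-hand element is spanned inside T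
    have hinhand : ∀ s, Reach s0 s → ∀ c, nonsat M part cap s.1 c s.2 →
        Spans M ((Cls M s.1 c) ∩ T) s.2 ∧
        ((CCfun M (insert s.2 (Cls M s.1 c))).erase s.2 ⊆ (Cls M s.1 c) ∩ T) := by
      intro s hr c hns
      obtain ⟨hF, hcnt, hyE, hyn⟩ := hinv _ hr
      have hdep : ¬ M.Indep (insert s.2 (Cls M s.1 c)) :=
        hterm s.1 s.2 hF hcnt hyE hyn c hns
      obtain ⟨hCsub, hCmin⟩ := CCfun_spec hdep
      have hyC : s.2 ∈ CCfun M (insert s.2 (Cls M s.1 c)) := by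
        by_contra h
        apply hCmin.1
        apply M.indep_mono (hF c).1
        intro w hw
        rcases Finset.mem_insert.1 (hCsub hw) with rfl | h2
        · exact absurd hw h
        · exact h2
      have hsub2 : (CCfun M (insert s.2 (Cls M s.1 c))).erase s.2 ⊆ (Cls M s.1 c) ∩ T := by
        intro w hw
        have hwy : w ≠ s.2 := Finset.ne_of_mem_erase hw
        have hwC : w ∈ Cls M s.1 c := by
          rcases Finset.mem_insert.1 (hCsub (Finset.mem_of_mem_erase hw)) with h | h
          · exact absurd h hwy
          · exact h
        have hwE : w ∈ M.E := (Finset.mem_filter.1 hwC).1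
        have hstep : Step M part cap (s.1, s.2) (swapFun s.1 s.2 w c, w) :=
          ⟨hyE, hyn, c, hns, hdep, hw, rfl⟩
        rw [Prod.mk.eta] at hstep
        exact Finset.mem_inter.2 ⟨hwC,
          Finset.mem_filter.2 ⟨hwE, ⟨_, hr.tail hstep⟩⟩⟩
      exact ⟨spans_mono (minDep_spans hCmin hyC) hsub2, hsub2⟩
    -- the span of each colour class inside T is invariant
    have hinv1 : ∀ s, Reach s0 s → ∀ (c : Fin (a + B)) (w : V),
        Spans M ((Cls M s.1 c) ∩ T) w ↔ Spans M ((Cls M f c) ∩ T) w := by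
      intro s hs
      induction hs with
      | refl => intro c w; exact Iff.rfl
      | @tail p q hpre hstep ih =>
        intro c w
        have hstep' := hstep
        obtain ⟨hyE, hyn, c0, hns, hdep, hzC, hq⟩ := hstep
        have hCs := CCfun_spec hdep
        have hzy : q.2 ≠ p.2 := Finset.ne_of_mem_erase hzC
        have hzCls : q.2 ∈ Cls M p.1 c0 := by
          have h := hCs.1 (Finset.mem_of_mem_erase hzC)
          rcases Finset.mem_insert.1 h with h2 | h2
          · exact absurd h2 hzy
          · exact h2
        have hz : p.1 q.2 = some c0 := (Finset.mem_filter.1 hzCls).2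
        have hzE : q.2 ∈ M.E := (Finset.mem_filter.1 hzCls).1
        by_cases hcc : c = c0
        · subst hcc
          have hcls : Cls M q.1 c = insert p.2 ((Cls M p.1 c).erase q.2) := by
            rw [hq]
            exact cls_swap_eq M hyE hyn hz hzy
          have hyT : p.2 ∈ T := by
            refine Finset.mem_filter.2 ⟨hyE, ⟨p.1, ?_⟩⟩
            rw [Prod.mk.eta]
            exact hpre
          have hzT : q.2 ∈ T := by
            refine Finset.mem_filter.2 ⟨hzE, ⟨q.1, ?_⟩⟩
            rw [Prod.mk.eta]
            exact hpre.tail hstep'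
          have hinter : (Cls M q.1 c) ∩ T = insert p.2 (((Cls M p.1 c) ∩ T).erase q.2) := by
            rw [hcls]
            ext u
            simp only [Finset.mem_inter, Finset.mem_insert, Finset.mem_erase]
            constructor
            · rintro ⟨rfl | ⟨h1, h2⟩, h3⟩
              · exact Or.inl rfl
              · exact Or.inr ⟨h1, h2, h3⟩
            · rintro (rfl | ⟨h1, h2, h3⟩)
              · exact ⟨Or.inl rfl, hyT⟩
              · exact ⟨Or.inr ⟨h1, h2⟩, h3⟩
          have hih := hinhand p hpre c hns
          have hspZ : Spans M ((Cls M p.1 c) ∩ T) p.2 := hih.1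
          have hzZ : q.2 ∈ (Cls M p.1 c) ∩ T := Finset.mem_inter.2 ⟨hzCls, hzT⟩
          have hzCmem : q.2 ∈ CCfun M (insert p.2 (Cls M p.1 c)) :=
            Finset.mem_of_mem_erase hzC
          have hspz : Spans M ((insert p.2 ((Cls M p.1 c) ∩ T)).erase q.2) q.2 := by
            refine spans_mono (minDep_spans hCs.2 hzCmem) ?_
            intro u hu
            have huz : u ≠ q.2 := Finset.ne_of_mem_erase hu
            have huC : u ∈ CCfun M (insert p.2 (Cls M p.1 c)) := Finset.mem_of_mem_erase hu
            rw [Finset.mem_erase, Finset.mem_insert]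
            refine ⟨huz, ?_⟩
            by_cases huy : u = p.2
            · exact Or.inl huy
            · exact Or.inr (hih.2 (Finset.mem_erase.2 ⟨huy, huC⟩))
          have e1 : insert p.2 ((((Cls M p.1 c) ∩ T)).erase q.2)
              = (insert p.2 ((Cls M p.1 c) ∩ T)).erase q.2 :=
            insert_erase_comm' hzy.symm
          rw [hinter, e1]
          have hzmem : q.2 ∈ insert p.2 ((Cls M p.1 c) ∩ T) :=
            Finset.mem_insert_of_mem hzZ
          exact ((spans_erase_iff hzmem hspz).symm.trans (spans_insert_iff hspZ)).trans
            (ih c w)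
        · have hcls : Cls M q.1 c = Cls M p.1 c := by
            rw [hq]
            exact cls_swap_ne M hyn hz hcc
          rw [hcls]
          exact ih c w
    -- lower bound on the number of nonsaturated colours
    have hK4 : ∀ (g : V → Option (Fin (a + B))) (y : V), Feas M part cap g → y ∈ M.E →
        g y = none →
        a ≤ (Finset.univ.filter (fun c : Fin (a + B) => nonsat M part cap g c y)).card := by
      intro g y hF hyE hyn
      set Dset := Finset.univ.filter (fun c : Fin (a + B) => nonsat M part cap g c y) with hD
      set sat : ι → Finset (Fin (a + B)) := fun i => Finset.univ.filter
        (fun c => ¬ ((Cls M g c).filter (fun w => part i w = part i y)).card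
          < cap i (part i y)) with hsat0
      have hsat : ∀ i, (sat i).card ≤ χp i - 1 := by
        intro i
        have hcap1 : 1 ≤ cap i (part i y) := hK2 i y hyE
        have hdisj : ∀ c1 ∈ (Finset.univ : Finset (Fin (a + B))), ∀ c2 ∈ Finset.univ,
            c1 ≠ c2 → Disjoint ((Cls M g c1).filter (fun w => part i w = part i y))
              ((Cls M g c2).filter (fun w => part i w = part i y)) := by
          intro c1 _ c2 _ hne
          rw [Finset.disjoint_left]
          intro u hu1 hu2
          rw [Finset.mem_filter, Cls, Finset.mem_filter] at hu1 hu2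
          exact hne (by
            have h1 := hu1.1.2
            have h2 := hu2.1.2
            rw [h1] at h2
            exact Option.some_inj.1 h2)
        have hsum : ∑ c : Fin (a + B),
            ((Cls M g c).filter (fun w => part i w = part i y)).card
            ≤ (M.E.filter (fun w => part i w = part i y)).card - 1 := by
          rw [← Finset.card_biUnion hdisj]
          have hsub : (Finset.univ.biUnion
              (fun c : Fin (a + B) => (Cls M g c).filter (fun w => part i w = part i y)))
              ⊆ (M.E.filter (fun w => part i w = part i y)).erase y := by
            intro u hu
            obtain ⟨c, -, hu⟩ := Finset.mem_biUnion.1 hu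
            rw [Finset.mem_filter, Cls, Finset.mem_filter] at hu
            refine Finset.mem_erase.2 ⟨?_, Finset.mem_filter.2 ⟨hu.1.1, hu.2⟩⟩
            intro h
            rw [h, hyn] at hu
            simp at hu
          refine le_trans (Finset.card_le_card hsub) ?_
          have hymem : y ∈ M.E.filter (fun w => part i w = part i y) :=
            Finset.mem_filter.2 ⟨hyE, rfl⟩
          rw [Finset.card_erase_of_mem hymem]
        have hlow : (sat i).card * cap i (part i y) ≤ ∑ c : Fin (a + B),
            ((Cls M g c).filter (fun w => part i w = part i y)).card := by
          calc (sat i).card * cap i (part i y)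
              = ∑ _c ∈ sat i, cap i (part i y) := by
                rw [Finset.sum_const, smul_eq_mul]
            _ ≤ ∑ c ∈ sat i, ((Cls M g c).filter (fun w => part i w = part i y)).card := by
                refine Finset.sum_le_sum ?_
                intro c hc
                rw [hsat0] at hc
                have := (Finset.mem_filter.1 hc).2
                omega
            _ ≤ ∑ c : Fin (a + B),
                ((Cls M g c).filter (fun w => part i w = part i y)).card :=
                Finset.sum_le_sum_of_subset (Finset.subset_univ _)
        have hEP := hK1 i (part i y)
        have hymem2 : y ∈ M.E.filter (fun w => part i w = part i y) :=
          Finset.mem_filter.2 ⟨hyE, rfl⟩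
        have hF1 : 0 < (M.E.filter (fun w => part i w = part i y)).card :=
          Finset.card_pos.2 ⟨y, hymem2⟩
        have h5 : (sat i).card * cap i (part i y)
            ≤ (M.E.filter (fun w => part i w = part i y)).card - 1 := le_trans hlow hsum
        have h6 : (sat i).card * cap i (part i y) + 1
            ≤ (M.E.filter (fun w => part i w = part i y)).card := by
          have h7 := Nat.add_le_add_right h5 1
          rwa [Nat.sub_add_cancel hF1] at h7
        have hkey : (sat i).card * cap i (part i y) + 1 ≤ χp i * cap i (part i y) :=
          le_trans h6 hEP
        have hfin : (sat i).card < χp i := by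
          by_contra h
          push_neg at h
          have h8 := Nat.mul_le_mul_right (cap i (part i y)) h
          exact Nat.not_succ_le_self _ (le_trans hkey h8)
        omega
      have hcompl : (Finset.univ : Finset (Fin (a + B)))
          ⊆ Dset ∪ Finset.univ.biUnion sat := by
        intro c _
        by_cases h : nonsat M part cap g c y
        · exact Finset.mem_union_left _ (Finset.mem_filter.2 ⟨Finset.mem_univ _, h⟩)
        · refine Finset.mem_union_right _ ?_
          unfold nonsat at h
          push_neg at h
          obtain ⟨i, hi⟩ := h
          exact Finset.mem_biUnion.2 ⟨i, Finset.mem_univ _,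
            Finset.mem_filter.2 ⟨Finset.mem_univ _, by omega⟩⟩
      have h1 : (a + B) ≤ Dset.card + ∑ i, (sat i).card := by
        have h2 := Finset.card_le_card hcompl
        rw [Finset.card_univ, Fintype.card_fin] at h2
        refine le_trans h2 (le_trans (Finset.card_union_le _ _) ?_)
        exact Nat.add_le_add_left Finset.card_biUnion_le _
      have h2 : ∑ i, (sat i).card ≤ B := by
        calc ∑ i, (sat i).card ≤ ∑ i, (χp i - 1) :=
            Finset.sum_le_sum (fun i _ => hsat i)
          _ = B := hB.symm
      omega
    -- the double-counting contradiction
    set Y : Fin (a + B) → Finset V :=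
      fun c => T.filter (fun v => Spans M ((Cls M f c) ∩ T) v) with hY
    have hYlb : a * T.card ≤ ∑ c : Fin (a + B), (Y c).card := by
      have hpt : ∀ v ∈ T, a ≤ (Finset.univ.filter
          (fun c : Fin (a + B) => Spans M ((Cls M f c) ∩ T) v)).card := by
        intro v hv
        obtain ⟨hvE0, g, hr⟩ := Finset.mem_filter.1 hv
        obtain ⟨hF, hcnt, hvE, hvn⟩ := hinv _ hr
        refine le_trans (hK4 g v hF hvE hvn) (Finset.card_le_card ?_)
        intro c hc
        rw [Finset.mem_filter] at hc ⊢
        refine ⟨hc.1, ?_⟩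
        have hsp := (hinhand (g, v) hr c hc.2).1
        exact (hinv1 (g, v) hr c v).1 hsp
      calc a * T.card = ∑ _v ∈ T, a := by rw [Finset.sum_const, smul_eq_mul, mul_comm]
        _ ≤ ∑ v ∈ T, (Finset.univ.filter
            (fun c : Fin (a + B) => Spans M ((Cls M f c) ∩ T) v)).card :=
            Finset.sum_le_sum hpt
        _ = ∑ c : Fin (a + B), (Y c).card := by
            simp only [Finset.card_filter, hY]
            rw [Finset.sum_comm]
    have hYub : ∀ c : Fin (a + B), (Y c).card ≤ a * ((Cls M f c) ∩ T).card := by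
      intro c
      have hYE : Y c ⊆ M.E := le_trans (Finset.filter_subset _ _) hTE
      refine le_trans (hKa _ hYE) ?_
      refine Nat.mul_le_mul_left a ?_
      have hsp : ∀ v ∈ Y c, Spans M ((Cls M f c) ∩ T) v :=
        fun v hv => (Finset.mem_filter.1 hv).2
      have h9 : rk M (Y c) ≤ rk M ((Cls M f c) ∩ T) := rk_le_of_spans hsp
      have h10 : rk M ((Cls M f c) ∩ T) = ((Cls M f c) ∩ T).card :=
        rk_indep (M.indep_mono (hfF c).1 Finset.inter_subset_left)
      exact h10 ▸ h9
    have hdisj2 : ∀ c1 ∈ (Finset.univ : Finset (Fin (a + B))), ∀ c2 ∈ Finset.univ,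
        c1 ≠ c2 → Disjoint ((Cls M f c1) ∩ T) ((Cls M f c2) ∩ T) := by
      intro c1 _ c2 _ hne
      rw [Finset.disjoint_left]
      intro u hu1 hu2
      rw [Finset.mem_inter, Cls, Finset.mem_filter] at hu1 hu2
      apply hne
      have h1 := hu1.1.2
      have h2 := hu2.1.2
      rw [h1] at h2
      exact Option.some_inj.1 h2
    have hsum5 : ∑ c : Fin (a + B), ((Cls M f c) ∩ T).card ≤ T.card - 1 := by
      rw [← Finset.card_biUnion hdisj2]
      have hsub : (Finset.univ.biUnion (fun c : Fin (a + B) => (Cls M f c) ∩ T))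
          ⊆ T.erase x := by
        intro u hu
        obtain ⟨c, -, hu⟩ := Finset.mem_biUnion.1 hu
        rw [Finset.mem_inter, Cls, Finset.mem_filter] at hu
        refine Finset.mem_erase.2 ⟨?_, hu.2⟩
        intro h
        rw [h, hxn] at hu
        simp at hu
      refine le_trans (Finset.card_le_card hsub) ?_
      rw [Finset.card_erase_of_mem hxT]
    have hchain : a * T.card ≤ a * (T.card - 1) := by
      calc a * T.card ≤ ∑ c : Fin (a + B), (Y c).card := hYlb
        _ ≤ ∑ c : Fin (a + B), a * ((Cls M f c) ∩ T).card :=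
            Finset.sum_le_sum (fun c _ => hYub c)
        _ = a * ∑ c : Fin (a + B), ((Cls M f c) ∩ T).card := by
            rw [Finset.mul_sum]
        _ ≤ a * (T.card - 1) := Nat.mul_le_mul_left a hsum5
    have hTpos : 1 ≤ T.card := Finset.card_pos.2 ⟨x, hxT⟩
    have hfinal := Nat.le_of_mul_le_mul_left hchain (by omega : 0 < a)
    omega

end Aux19

/-- Main theorem (existential content): given a matroid `M1` of chromatic number `a`
and `k-1` partition matroids with chromatic numbers `χp i`, set `B = Σ (χp i - 1)`.
Any feasible partial coloring with `a + B` colors leaving some element uncolored can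
be extended to a feasible partial coloring with one more colored element; consequently
the intersection has chromatic number at most `1 + (a - 1) + Σ (χp i - 1)`. -/
theorem stmt_19 {V : Type*} [DecidableEq V] (k : ℕ) (M1 : FinMatroid V)
    (part : Fin (k - 1) → V → ℕ) (cap : Fin (k - 1) → ℕ → ℕ)
    (a : ℕ)
    (ha : IsLeast {n : ℕ | ∃ f : V → ℕ, (∀ y ∈ M1.E, f y < n) ∧
        ∀ c : ℕ, M1.Indep (M1.E.filter fun y => f y = c)} a)
    (χp : Fin (k - 1) → ℕ)
    (hχp : ∀ i, IsLeast {n : ℕ | ∃ f : V → ℕ, (∀ y ∈ M1.E, f y < n) ∧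
        ∀ c : ℕ, ∀ t : ℕ,
          ((M1.E.filter fun y => f y = c).filter fun y => part i y = t).card ≤ cap i t}
      (χp i))
    (B : ℕ) (hB : B = ∑ i, (χp i - 1)) :
    (∀ f : V → Option (Fin (a + B)),
        (∀ c : Fin (a + B), M1.Indep (M1.E.filter fun y => f y = some c) ∧
          ∀ i, ∀ t : ℕ,
            ((M1.E.filter fun y => f y = some c).filter fun y => part i y = t).card
              ≤ cap i t) →
        (∃ x ∈ M1.E, f x = none) →
        ∃ f' : V → Option (Fin (a + B)),
          (∀ c : Fin (a + B), M1.Indep (M1.E.filter fun y => f' y = some c) ∧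
            ∀ i, ∀ t : ℕ,
              ((M1.E.filter fun y => f' y = some c).filter fun y => part i y = t).card
                ≤ cap i t) ∧
          (M1.E.filter fun y => (f' y).isSome).card
            = (M1.E.filter fun y => (f y).isSome).card + 1)
    ∧ ∃ g : V → Fin (1 + (a - 1) + B),
        ∀ c : Fin (1 + (a - 1) + B),
          M1.Indep (M1.E.filter fun y => g y = c) ∧
          ∀ i, ∀ t : ℕ,
            ((M1.E.filter fun y => g y = c).filter fun y => part i y = t).card
              ≤ cap i t := by
  classical
  obtain ⟨G, hGsome, hGfeas⟩ := Aux19.main_total M1 part cap a ha χp hχp B hB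
  constructor
  · -- extension of partial colorings
    intro f _hf hex
    obtain ⟨x, hxE, hxn⟩ := hex
    have hxnot : x ∉ M1.E.filter fun y => (f y).isSome := by
      intro h
      rw [Finset.mem_filter, hxn] at h
      simp at h
    have hjlt : (M1.E.filter fun y => (f y).isSome).card < M1.E.card := by
      refine Finset.card_lt_card ?_
      rw [Finset.ssubset_iff_of_subset (Finset.filter_subset _ _)]
      exact ⟨x, hxE, hxnot⟩
    obtain ⟨S, hSE, hScard⟩ := Finset.exists_subset_card_eq (s := M1.E)
      (n := (M1.E.filter fun y => (f y).isSome).card + 1) (by omega)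
    refine ⟨fun y => if y ∈ S then G y else none, ?_, ?_⟩
    · intro c
      have hcls : (M1.E.filter fun y =>
          (if y ∈ S then G y else none) = some c) = S.filter (fun y => G y = some c) := by
        ext w
        by_cases hw : w ∈ S
        · simp [hw, hSE hw]
        · simp [hw]
      have hsub : S.filter (fun y => G y = some c) ⊆ Aux19.Cls M1 G c := by
        intro w hw
        rw [Finset.mem_filter] at hw
        exact Finset.mem_filter.2 ⟨hSE hw.1, hw.2⟩
      rw [hcls]
      refine ⟨M1.indep_mono (hGfeas c).1 hsub, ?_⟩
      intro i t
      exact le_trans (Finset.card_le_card (Finset.filter_subset_filter _ hsub))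
        ((hGfeas c).2 i t)
    · have hcnt : (M1.E.filter fun y =>
          ((if y ∈ S then G y else none) : Option (Fin (a + B))).isSome) = S := by
        ext w
        by_cases hw : w ∈ S
        · simp [hw, hSE hw, hGsome w (hSE hw)]
        · simp [hw]
      rw [hcnt, hScard]
  · -- a total feasible coloring
    by_cases hE : M1.E = ∅
    · refine ⟨fun _ => ⟨0, by omega⟩, ?_⟩
      intro c
      have hcls : (M1.E.filter fun y => (⟨0, by omega⟩ : Fin (1 + (a - 1) + B)) = c) = ∅ := by
        rw [hE, Finset.filter_empty]
      constructor
      · have hcls2 : (M1.E.filter fun y =>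
            (fun _ : V => (⟨0, by omega⟩ : Fin (1 + (a - 1) + B))) y = c) = ∅ := by
          rw [hE, Finset.filter_empty]
        rw [hcls2]
        exact M1.indep_empty
      · intro i t
        have hcls2 : (M1.E.filter fun y =>
            (fun _ : V => (⟨0, by omega⟩ : Fin (1 + (a - 1) + B))) y = c) = ∅ := by
          rw [hE, Finset.filter_empty]
        rw [hcls2]
        simp
    · obtain ⟨x0, hx0⟩ := Finset.nonempty_iff_ne_empty.2 hE
      have ha1 : 1 ≤ a := by
        by_contra h
        obtain ⟨g0, hlt, -⟩ := ha.1
        have := hlt x0 hx0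
        omega
      have heq : a + B = 1 + (a - 1) + B := by omega
      refine ⟨fun y => Fin.cast heq ((G y).getD ⟨0, by omega⟩), ?_⟩
      intro c
      have hcls : (M1.E.filter fun y =>
          Fin.cast heq ((G y).getD ⟨0, by omega⟩) = c)
          = M1.E.filter (fun y => G y = some (Fin.cast heq.symm c)) := by
        ext w
        simp only [Finset.mem_filter]
        refine and_congr_right (fun hwE => ?_)
        obtain ⟨u, hu⟩ := Option.isSome_iff_exists.1 (hGsome w hwE)
        rw [hu, Option.getD_some, Option.some_inj]
        constructor
        · intro h
          subst h
          exact Fin.ext (by simp)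
        · intro h
          subst h
          exact Fin.ext (by simp)
      rw [hcls]
      exact ⟨(hGfeas _).1, (hGfeas _).2⟩
end
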